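/- arXiv:1703.01723 — 2 statements merged into one kernel-verified Lean document; each statement's English description precedes it below -/
import Mathlib

section
/- Let σ, ρ, τ : ℝ² → ℂ be smooth functions of (x, t) with τ nowhere vanishing, satisfying the bilinear system: i·D_t σ·τ + (1/2)·D_x² σ·τ = 0, i·D_t ρ·τ − (1/2)·D_x² ρ·τ = 0, and D_x² τ·τ = −2σρ. Then q = σ/τ and r = ρ/τ satisfy the coupled nonlinear Schrödinger-type equations: q_t − (i/2)·q_{xx} + i·q²·r = 0 and r_t + (i/2)·r_{xx} − i·q·r² = 0. -/
noncomputable section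

/-- Partial derivative in the first variable `x` of a function on `ℝ² = ℝ × ℝ`. -/
def pX (f : ℝ × ℝ → ℂ) : ℝ × ℝ → ℂ :=
  fun p => deriv (fun x => f (x, p.2)) p.1

/-- Partial derivative in the second variable `t`. -/
def pT (f : ℝ × ℝ → ℂ) : ℝ × ℝ → ℂ :=
  fun p => deriv (fun t => f (p.1, t)) p.2

/-- `D_t a·b = a_t b − a b_t`. -/
def HDt (a b : ℝ × ℝ → ℂ) : ℝ × ℝ → ℂ :=
  fun p => pT a p * b p - a p * pT b p

/-- `D_x² a·b = a_{xx} b − 2 a_x b_x + a b_{xx}`. -/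
def HDx2 (a b : ℝ × ℝ → ℂ) : ℝ × ℝ → ℂ :=
  fun p => pX (pX a) p * b p - 2 * pX a p * pX b p + a p * pX (pX b) p

/-- `D_x² τ·τ = 2(τ τ_{xx} − (τ_x)²)`. -/
def HDx2self (a : ℝ × ℝ → ℂ) : ℝ × ℝ → ℂ :=
  fun p => 2 * (a p * pX (pX a) p - (pX a p) ^ 2)

lemma hasDerivAt_X (f : ℝ × ℝ → ℂ) (hf : Differentiable ℝ f) (p : ℝ × ℝ) :
    HasDerivAt (fun x => f (x, p.2)) (fderiv ℝ f p (1, 0)) p.1 := by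
  have h1 : HasDerivAt (fun x : ℝ => (x, p.2)) ((1 : ℝ), (0 : ℝ)) p.1 :=
    HasDerivAt.prodMk (hasDerivAt_id p.1) (hasDerivAt_const p.1 p.2)
  have h2 := ((hf p).hasFDerivAt).comp_hasDerivAt p.1 (by simpa using h1)
  simpa [Function.comp_def] using h2

lemma hasDerivAt_T (f : ℝ × ℝ → ℂ) (hf : Differentiable ℝ f) (p : ℝ × ℝ) :
    HasDerivAt (fun t => f (p.1, t)) (fderiv ℝ f p (0, 1)) p.2 := by
  have h1 : HasDerivAt (fun t : ℝ => (p.1, t)) ((0 : ℝ), (1 : ℝ)) p.2 :=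
    HasDerivAt.prodMk (hasDerivAt_const p.2 p.1) (hasDerivAt_id p.2)
  have h2 := ((hf p).hasFDerivAt).comp_hasDerivAt p.2 (by simpa using h1)
  simpa [Function.comp_def] using h2

lemma pX_eq (f : ℝ × ℝ → ℂ) (hf : Differentiable ℝ f) :
    pX f = fun p => fderiv ℝ f p (1, 0) :=
  funext fun p => (hasDerivAt_X f hf p).deriv

lemma pT_eq (f : ℝ × ℝ → ℂ) (hf : Differentiable ℝ f) :
    pT f = fun p => fderiv ℝ f p (0, 1) :=
  funext fun p => (hasDerivAt_T f hf p).deriv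

lemma hasDerivAt_X' (f : ℝ × ℝ → ℂ) (hf : Differentiable ℝ f) (p : ℝ × ℝ) :
    HasDerivAt (fun x => f (x, p.2)) (pX f p) p.1 := by
  rw [pX_eq f hf]; exact hasDerivAt_X f hf p

lemma hasDerivAt_T' (f : ℝ × ℝ → ℂ) (hf : Differentiable ℝ f) (p : ℝ × ℝ) :
    HasDerivAt (fun t => f (p.1, t)) (pT f p) p.2 := by
  rw [pT_eq f hf]; exact hasDerivAt_T f hf p

lemma contDiff_pX (f : ℝ × ℝ → ℂ) (hf : ContDiff ℝ (⊤ : ℕ∞) f) : ContDiff ℝ (⊤ : ℕ∞) (pX f) := by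
  rw [pX_eq f (hf.differentiable (by simp))]
  exact (hf.fderiv_right (by simp)).clm_apply contDiff_const

lemma pX_div (f g : ℝ × ℝ → ℂ) (hf : Differentiable ℝ f) (hg : Differentiable ℝ g)
    (p : ℝ × ℝ) (hg0 : g p ≠ 0) :
    pX (fun p => f p / g p) p = (pX f p * g p - f p * pX g p) / g p ^ 2 := by
  have hd := (hasDerivAt_X' f hf p).div (hasDerivAt_X' g hg p) (by simpa using hg0)
  exact hd.deriv

lemma pT_div (f g : ℝ × ℝ → ℂ) (hf : Differentiable ℝ f) (hg : Differentiable ℝ g)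
    (p : ℝ × ℝ) (hg0 : g p ≠ 0) :
    pT (fun p => f p / g p) p = (pT f p * g p - f p * pT g p) / g p ^ 2 := by
  have hd := (hasDerivAt_T' f hf p).div (hasDerivAt_T' g hg p) (by simpa using hg0)
  exact hd.deriv

lemma pX_mul (f g : ℝ × ℝ → ℂ) (hf : Differentiable ℝ f) (hg : Differentiable ℝ g)
    (p : ℝ × ℝ) :
    pX (fun p => f p * g p) p = pX f p * g p + f p * pX g p := by
  have hd := (hasDerivAt_X' f hf p).mul (hasDerivAt_X' g hg p)
  exact hd.deriv

lemma pX_sub (f g : ℝ × ℝ → ℂ) (hf : Differentiable ℝ f) (hg : Differentiable ℝ g)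
    (p : ℝ × ℝ) :
    pX (fun p => f p - g p) p = pX f p - pX g p := by
  have hd := (hasDerivAt_X' f hf p).sub (hasDerivAt_X' g hg p)
  exact hd.deriv

lemma pX_sq (f : ℝ × ℝ → ℂ) (hf : Differentiable ℝ f) (p : ℝ × ℝ) :
    pX (fun p => f p ^ 2) p = 2 * f p * pX f p := by
  have h : (fun p => f p ^ 2) = fun p => f p * f p := by funext p; ring
  rw [h, pX_mul f f hf hf p]; ring

/-- The key pointwise computation for one component. -/
lemma key (σ τ : ℝ × ℝ → ℂ) (hσ : ContDiff ℝ (⊤ : ℕ∞) σ) (hτ : ContDiff ℝ (⊤ : ℕ∞) τ)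
    (hτ0 : ∀ p, τ p ≠ 0) (p : ℝ × ℝ) :
    pT (fun p => σ p / τ p) p =
      (pT σ p * τ p - σ p * pT τ p) / τ p ^ 2 ∧
    pX (pX (fun p => σ p / τ p)) p =
      ((pX (pX σ) p * τ p - σ p * pX (pX τ) p) * τ p ^ 2 -
        (pX σ p * τ p - σ p * pX τ p) * (2 * τ p * pX τ p)) / (τ p ^ 2) ^ 2 := by
  have dσ := hσ.differentiable (by simp)
  have dτ := hτ.differentiable (by simp)
  have dσx := (contDiff_pX σ hσ).differentiable (by simp)
  have dτx := (contDiff_pX τ hτ).differentiable (by simp)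
  constructor
  · exact pT_div σ τ dσ dτ p (hτ0 p)
  · have h1 : pX (fun p => σ p / τ p) =
        fun p => (pX σ p * τ p - σ p * pX τ p) / τ p ^ 2 := by
      funext p; exact pX_div σ τ dσ dτ p (hτ0 p)
    rw [h1]
    have dN : Differentiable ℝ (fun p => pX σ p * τ p - σ p * pX τ p) :=
      ((dσx.mul dτ).sub (dσ.mul dτx))
    have dD : Differentiable ℝ (fun p => τ p ^ 2) := dτ.pow 2
    have hD0 : (fun p => τ p ^ 2) p ≠ 0 := pow_ne_zero 2 (hτ0 p)
    rw [pX_div _ _ dN dD p hD0]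
    rw [pX_sub (fun p => pX σ p * τ p) (fun p => σ p * pX τ p) (dσx.mul dτ) (dσ.mul dτx) p,
        pX_mul _ _ dσx dτ p, pX_mul _ _ dσ dτx p, pX_sq τ dτ p]
    ring

theorem stmt_11
    (σ ρ τ : ℝ × ℝ → ℂ)
    (hσ : ContDiff ℝ (⊤ : ℕ∞) σ) (hρ : ContDiff ℝ (⊤ : ℕ∞) ρ) (hτ : ContDiff ℝ (⊤ : ℕ∞) τ)
    (hτ0 : ∀ p, τ p ≠ 0)
    (heq1 : ∀ p, Complex.I * HDt σ τ p + (1 / 2) * HDx2 σ τ p = 0)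
    (heq2 : ∀ p, Complex.I * HDt ρ τ p - (1 / 2) * HDx2 ρ τ p = 0)
    (heq3 : ∀ p, HDx2self τ p = -2 * σ p * ρ p)
    (q r : ℝ × ℝ → ℂ)
    (hq : q = fun p => σ p / τ p)
    (hr : r = fun p => ρ p / τ p) :
    (∀ p, pT q p - (Complex.I / 2) * pX (pX q) p + Complex.I * (q p) ^ 2 * r p = 0) ∧
    (∀ p, pT r p + (Complex.I / 2) * pX (pX r) p - Complex.I * q p * (r p) ^ 2 = 0) := by
  subst hq hr
  constructor
  · intro p
    obtain ⟨h1, h2⟩ := key σ τ hσ hτ hτ0 p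
    rw [h1, h2]
    have e1 := heq1 p
    have e3 := heq3 p
    simp only [HDt, HDx2] at e1
    simp only [HDx2self] at e3
    have hT := hτ0 p
    have e1' : pT σ p * τ p - σ p * pT τ p =
        (Complex.I / 2) * (pX (pX σ) p * τ p - 2 * pX σ p * pX τ p + σ p * pX (pX τ) p) := by
      linear_combination (-Complex.I) * e1 + (pT σ p * τ p - σ p * pT τ p) * Complex.I_sq
    field_simp
    linear_combination (2 * τ p) * e1' + (Complex.I * σ p) * e3
  · intro p
    obtain ⟨h1, h2⟩ := key ρ τ hρ hτ hτ0 p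
    rw [h1, h2]
    have e2 := heq2 p
    have e3 := heq3 p
    simp only [HDt, HDx2] at e2
    simp only [HDx2self] at e3
    have hT := hτ0 p
    have e2' : pT ρ p * τ p - ρ p * pT τ p =
        (-Complex.I / 2) * (pX (pX ρ) p * τ p - 2 * pX ρ p * pX τ p + ρ p * pX (pX τ) p) := by
      linear_combination (-Complex.I) * e2 + (pT ρ p * τ p - ρ p * pT τ p) * Complex.I_sq
    field_simp
    linear_combination (2 * τ p) * e2' + (-Complex.I * ρ p) * e3
end
end

section
/- Let h ∈ ℝ, h ≠ 0, and for each n ∈ ℤ let q_n, r_n : ℝ² → ℂ be smooth functions of (x, t). Assume for all n the lattice relations q_{n,x} = (q_n − q_{n−1})/h + h q_n² r_{n−1} and r_{n,x} = (r_{n+1} − r_n)/h − h q_{n+1} r_n², together with the flow equations q_{n,t} = (i/2)·q_{n,xx} − i·q_n² r_n and r_{n,t} = −(i/2)·r_{n,xx} + i·q_n r_n². Then the semi-discrete AKNS (NLS) equations hold for all n: q_{n,t} + i q_n² r_n − (i/2)·[ (q_n − 2q_{n−1} + q_{n−2})/h² + 2 q_n² r_{n−1} − 2 q_n q_{n−1}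 r_{n−1} + q_n² r_n − q_{n−1}² r_{n−2} + h² q_n³ r_{n−1}² ] = 0, and r_{n,t} − i q_n r_n² + (i/2)·[ (r_{n+2} − 2r_{n+1} + r_n)/h² + 2 q_{n+1} r_n² − 2 q_{n+1} r_{n+1} r_n − q_{n+2} r_{n+1}² + q_n r_n² + h² q_{n+1}² r_n³ ] = 0. -/
noncomputable section

lemma sliceX (f : ℝ × ℝ → ℂ) (hf : ContDiff ℝ (⊤ : ℕ∞) f) (t x : ℝ) :
    HasDerivAt (fun y => f (y, t)) (pX f (x, t)) x := by
  have hD : Differentiable ℝ (fun y : ℝ => f (y, t)) :=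
    (hf.differentiable (by simp)).comp (differentiable_id.prodMk (differentiable_const t))
  simpa [pX] using (hD x).hasDerivAt

theorem stmt_12
    (h : ℝ) (hh : h ≠ 0)
    (q r : ℤ → ℝ × ℝ → ℂ)
    (hq : ∀ n, ContDiff ℝ (⊤ : ℕ∞) (q n)) (hr : ∀ n, ContDiff ℝ (⊤ : ℕ∞) (r n))
    (hlat1 : ∀ n p, pX (q n) p
        = (q n p - q (n - 1) p) / (h : ℂ) + (h : ℂ) * (q n p) ^ 2 * r (n - 1) p)
    (hlat2 : ∀ n p, pX (r n) p
        = (r (n + 1) p - r n p) / (h : ℂ) - (h : ℂ) * q (n + 1) p * (r n p) ^ 2)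
    (hflow1 : ∀ n p, pT (q n) p
        = (Complex.I / 2) * pX (pX (q n)) p - Complex.I * (q n p) ^ 2 * r n p)
    (hflow2 : ∀ n p, pT (r n) p
        = -(Complex.I / 2) * pX (pX (r n)) p + Complex.I * q n p * (r n p) ^ 2) :
    (∀ n p, pT (q n) p + Complex.I * (q n p) ^ 2 * r n p
        - (Complex.I / 2) * ((q n p - 2 * q (n - 1) p + q (n - 2) p) / (h : ℂ) ^ 2
          + 2 * (q n p) ^ 2 * r (n - 1) p - 2 * q n p * q (n - 1) p * r (n - 1) p
          + (q n p) ^ 2 * r n p - (q (n - 1) p) ^ 2 * r (n - 2) p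
          + (h : ℂ) ^ 2 * (q n p) ^ 3 * (r (n - 1) p) ^ 2) = 0) ∧
    (∀ n p, pT (r n) p - Complex.I * q n p * (r n p) ^ 2
        + (Complex.I / 2) * ((r (n + 2) p - 2 * r (n + 1) p + r n p) / (h : ℂ) ^ 2
          + 2 * q (n + 1) p * (r n p) ^ 2 - 2 * q (n + 1) p * r (n + 1) p * r n p
          - q (n + 2) p * (r (n + 1) p) ^ 2 + q n p * (r n p) ^ 2
          + (h : ℂ) ^ 2 * (q (n + 1) p) ^ 2 * (r n p) ^ 3) = 0) := by
  have hh' : (h : ℂ) ≠ 0 := by exact_mod_cast hh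
  constructor
  · intro n p
    obtain ⟨x, t⟩ := p
    have Hqn := sliceX (q n) (hq n) t x
    have Hqn1 := sliceX (q (n - 1)) (hq (n - 1)) t x
    have Hrn1 := sliceX (r (n - 1)) (hr (n - 1)) t x
    have h1 := ((Hqn.sub Hqn1).div_const (h : ℂ))
    have h2 := (((Hqn.mul Hqn).const_mul (h : ℂ)).mul Hrn1)
    have hHn := h1.add h2
    have key : pX (pX (q n)) (x, t)
        = (pX (q n) (x, t) - pX (q (n - 1)) (x, t)) / (h : ℂ)
          + ((h : ℂ) * (pX (q n) (x, t) * q n (x, t) + q n (x, t) * pX (q n) (x, t))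
              * r (n - 1) (x, t)
            + (h : ℂ) * (q n (x, t) * q n (x, t)) * pX (r (n - 1)) (x, t)) := by
      have e : (fun y => pX (q n) (y, t))
          = (fun y => (q n (y, t) - q (n - 1) (y, t)) / (h : ℂ)
            + (h : ℂ) * (q n (y, t) * q n (y, t)) * r (n - 1) (y, t)) :=
        funext fun y => by rw [hlat1 n (y, t)]; ring
      show deriv (fun y => pX (q n) (y, t)) x = _
      rw [e]
      exact hHn.deriv
    have e1 : n - 1 + 1 = n := by ring
    have e2 : n - 1 - 1 = n - 2 := by ring
    rw [hflow1 n (x, t), key, hlat1 n (x, t), hlat1 (n - 1) (x, t),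
      hlat2 (n - 1) (x, t), e1, e2]
    field_simp
    ring
  · intro n p
    obtain ⟨x, t⟩ := p
    have Hrn := sliceX (r n) (hr n) t x
    have Hrn1 := sliceX (r (n + 1)) (hr (n + 1)) t x
    have Hqn1 := sliceX (q (n + 1)) (hq (n + 1)) t x
    have h1 := ((Hrn1.sub Hrn).div_const (h : ℂ))
    have h2 := ((Hqn1.const_mul (h : ℂ)).mul (Hrn.mul Hrn))
    have hHn := h1.sub h2
    have key : pX (pX (r n)) (x, t)
        = (pX (r (n + 1)) (x, t) - pX (r n) (x, t)) / (h : ℂ)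
          - ((h : ℂ) * pX (q (n + 1)) (x, t) * (r n (x, t) * r n (x, t))
            + (h : ℂ) * q (n + 1) (x, t)
              * (pX (r n) (x, t) * r n (x, t) + r n (x, t) * pX (r n) (x, t))) := by
      have e : (fun y => pX (r n) (y, t))
          = (fun y => (r (n + 1) (y, t) - r n (y, t)) / (h : ℂ)
            - (h : ℂ) * q (n + 1) (y, t) * (r n (y, t) * r n (y, t))) :=
        funext fun y => by rw [hlat2 n (y, t)]; ring
      show deriv (fun y => pX (r n) (y, t)) x = _
      rw [e]
      exact hHn.deriv
    have e1 : n + 1 + 1 = n + 2 := by ring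
    have e2 : n + 1 - 1 = n := by ring
    rw [hflow2 n (x, t), key, hlat2 n (x, t), hlat2 (n + 1) (x, t),
      hlat1 (n + 1) (x, t), e1, e2]
    field_simp
    ring
end
end
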